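/- arXiv:math/0509051 — 4 statements merged into one kernel-verified Lean document; each statement's English description precedes it below -/
import Mathlib

section
/- Let φ be a weak Pisot substitution on the alphabet 𝒜 = {1,…,d} with d ≥ 2. Then 𝒫_φ consists of a single equivalence class under ∼; that is, any two elements of 𝒫_φ are equivalent. -/
/- Statement 0: For a weak Pisot substitution φ, the set 𝒫_φ consists of a single
equivalence class under the relation generated by equality in either coordinate. -/

namespace SubstSp

variable {d : ℕ}

/-- One application of a substitution to a finite word. -/
def apply (φ : Fin d → List (Fin d)) (w : List (Fin d)) : List (Fin d) := w.flatMap φ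

/-- `n`-th iterate of the substitution on finite words. -/
def iter (φ : Fin d → List (Fin d)) (n : ℕ) (w : List (Fin d)) : List (Fin d) :=
  (apply φ)^[n] w

/-- The language of the substitution: nonempty finite words occurring as factors of some
`φⁿ(i)`. -/
def Lang (φ : Fin d → List (Fin d)) : Set (List (Fin d)) :=
  {w | w ≠ [] ∧ ∃ (i : Fin d) (n : ℕ), w <:+: iter φ n [i]}

/-- Primitivity: for all sufficiently large `n`, `φⁿ(j)` contains every letter `i`. -/
def Primitive (φ : Fin d → List (Fin d)) : Prop :=
  ∃ N : ℕ, ∀ n ≥ N, ∀ i j : Fin d, i ∈ iter φ n [j]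

/-- A bi-infinite word is allowed if all of its finite factors lie in the language. -/
def Allowed (φ : Fin d → List (Fin d)) (w : ℤ → Fin d) : Prop :=
  ∀ (m : ℤ) (k : ℕ), 0 < k → (List.ofFn fun t : Fin k => w (m + (t.1 : ℤ))) ∈ Lang φ

/-- Aperiodicity: primitive with infinitely many allowed bi-infinite words. -/
def Aperiodic (φ : Fin d → List (Fin d)) : Prop :=
  Primitive φ ∧ {w : ℤ → Fin d | Allowed φ w}.Infinite

/-- Abelianization matrix of the substitution. -/
def abel (φ : Fin d → List (Fin d)) : Matrix (Fin d) (Fin d) ℤ :=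
  Matrix.of fun i j => ((φ j).count i : ℤ)

/-- `μ` is a (complex) eigenvalue of the integer matrix `M`. -/
def IsEigenvalue (M : Matrix (Fin d) (Fin d) ℤ) (μ : ℂ) : Prop :=
  (M.map (Int.cast : ℤ → ℂ)).charpoly.IsRoot μ

/-- Weak Pisot substitution. -/
def WeakPisot (φ : Fin d → List (Fin d)) : Prop :=
  Primitive φ ∧ Aperiodic φ ∧
    ∃ lam : ℝ, 1 < lam ∧ IsEigenvalue (abel φ) (lam : ℂ) ∧
      ∀ μ : ℂ, IsEigenvalue (abel φ) μ → μ ≠ (lam : ℂ) → ‖μ‖ < 1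

/-- `φ⁺`: the first letter of `φ(a)`. -/
def plusMap (φ : Fin d → List (Fin d)) (hne : ∀ a, φ a ≠ []) : Fin d → Fin d :=
  fun a => (φ a).head (hne a)

/-- `φ⁻`: the last letter of `φ(a)`. -/
def minusMap (φ : Fin d → List (Fin d)) (hne : ∀ a, φ a ≠ []) : Fin d → Fin d :=
  fun a => (φ a).getLast (hne a)

/-- `S⁺`: the eventual range of `φ⁺`. -/
def Splus (φ : Fin d → List (Fin d)) (hne : ∀ a, φ a ≠ []) : Set (Fin d) :=
  ⋂ n : ℕ, Set.range ((plusMap φ hne)^[n])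

/-- `S⁻`: the eventual range of `φ⁻`. -/
def Sminus (φ : Fin d → List (Fin d)) (hne : ∀ a, φ a ≠ []) : Set (Fin d) :=
  ⋂ n : ℕ, Set.range ((minusMap φ hne)^[n])

/-- `𝒫_φ = {(a,b) ∈ S⁻ × S⁺ : ab ∈ 𝓛_φ}`. -/
def Pphi (φ : Fin d → List (Fin d)) (hne : ∀ a, φ a ≠ []) : Set (Fin d × Fin d) :=
  {p | p.1 ∈ Sminus φ hne ∧ p.2 ∈ Splus φ hne ∧ [p.1, p.2] ∈ Lang φ}

/-- The generating relation for `∼` on `𝒫_φ`: two elements of `𝒫_φ` are related if they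
agree in the first or the second coordinate. -/
def prel (φ : Fin d → List (Fin d)) (hne : ∀ a, φ a ≠ []) :
    Fin d × Fin d → Fin d × Fin d → Prop :=
  fun p q => p ∈ Pphi φ hne ∧ q ∈ Pphi φ hne ∧ (p.1 = q.1 ∨ p.2 = q.2)

end SubstSp

/-!
Fix `p ∈ 𝒫_φ` and let `E₁`, `E₂` be the sets of first and second coordinates of the members of its
class. For some `m > 0` the maps `F = (φ⁻)^m` and `G = (φ⁺)^m` are idempotent, hence retractions
onto `S⁻` and `S⁺`; for every `ab ∈ 𝓛_φ` the pair `(F a, G b)` lies in `𝒫_φ`, so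
`F a ∈ E₁ ↔ G b ∈ E₂`. Therefore `z = 1[F · ∈ E₁] - 1[G · ∈ E₂]` telescopes along the words of
`𝓛_φ`: its sum over `φⁿ(x)`, the `x`-th entry of `z A_φⁿ`, lies in `{-1, 0, 1}` and is determined
by the last and the first letter of `φⁿ(x)`. A bounded integer sequence satisfying the recurrence of
the characteristic polynomial of a weak Pisot matrix tends to `0`, so it eventually vanishes, which
forces `F x ∈ E₁ ↔ G x ∈ E₂` for every letter `x`. Hence `F a ∈ E₁ ↔ F b ∈ E₁` whenever
`ab ∈ 𝓛_φ`, and by primitivity for all letters; for `a = p.1` and `b = q.1` this puts `q` in the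
class of `p`.
-/

section SeqShift

open Polynomial Filter Topology Matrix

variable (R : Type*) [CommSemiring R]

def seqShift : Module.End R (ℕ → R) where
  toFun c n := c (n + 1)
  map_add' _ _ := rfl
  map_smul' _ _ := rfl

variable {R}

lemma seqShift_pow_apply (i : ℕ) (c : ℕ → R) (n : ℕ) : (seqShift R ^ i) c n = c (n + i) := by
  induction i generalizing c n with
  | zero => rfl
  | succ i ih => rw [pow_succ, Module.End.mul_apply, ih]; rfl

lemma aeval_seqShift_apply (p : R[X]) (c : ℕ → R) (n : ℕ) :
    aeval (seqShift R) p c n = ∑ i ∈ Finset.range (p.natDegree + 1), p.coeff i * c (n + i) := by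
  rw [aeval_eq_sum_range, LinearMap.sum_apply, Finset.sum_apply]
  simp only [LinearMap.smul_apply, Pi.smul_apply, seqShift_pow_apply, smul_eq_mul]

lemma aeval_seqShift_vecMul_pow {ι : Type*} [Fintype ι] [DecidableEq ι] (A : Matrix ι ι R)
    (v : ι → R) (x : ι) (p : R[X]) :
    aeval (seqShift R) p (fun n => (v ᵥ* A ^ n) x) = fun n => (v ᵥ* (A ^ n * aeval A p)) x := by
  funext n
  rw [aeval_seqShift_apply, aeval_eq_sum_range, Finset.mul_sum, Matrix.vecMul_sum, Finset.sum_apply]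
  refine Finset.sum_congr rfl fun i _ => ?_
  rw [Matrix.mul_smul, Matrix.vecMul_smul, pow_add, Pi.smul_apply, smul_eq_mul]

lemma exists_bound_aeval_seqShift {R : Type*} [NormedCommRing R] (p : R[X]) {c : ℕ → R}
    (hc : ∃ B, ∀ n, ‖c n‖ ≤ B) : ∃ B, ∀ n, ‖aeval (seqShift R) p c n‖ ≤ B := by
  obtain ⟨B, hB⟩ := hc
  refine ⟨∑ i ∈ Finset.range (p.natDegree + 1), ‖p.coeff i‖ * B, fun n => ?_⟩
  rw [aeval_seqShift_apply]
  refine (norm_sum_le _ _).trans (Finset.sum_le_sum fun i _ => ?_)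
  exact (norm_mul_le _ _).trans (mul_le_mul_of_nonneg_left (hB _) (norm_nonneg _))

lemma aeval_X_sub_C_seqShift_apply {R : Type*} [CommRing R] (μ : R) (c : ℕ → R) (n : ℕ) :
    aeval (seqShift R) (X - C μ) c n = c (n + 1) - μ * c n := by
  rw [map_sub, aeval_X, aeval_C, LinearMap.sub_apply, Module.algebraMap_end_apply]
  rfl

end SeqShift

section Analysis

open Polynomial Filter Topology

variable {𝕜 : Type*} [NormedField 𝕜]

lemma eq_zero_of_aeval_X_sub_C_pow_eq_zero {μ : 𝕜} (hμ : 1 < ‖μ‖) (k : ℕ) {c : ℕ → 𝕜}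
    (hc : ∃ B, ∀ n, ‖c n‖ ≤ B) (h : aeval (seqShift 𝕜) ((X - C μ) ^ k) c = 0) : c = 0 := by
  induction k generalizing c with
  | zero => simpa using h
  | succ k ih =>
    have hstep : aeval (seqShift 𝕜) (X - C μ) c = 0 :=
      ih (exists_bound_aeval_seqShift _ hc) (by rwa [pow_succ, map_mul, Module.End.mul_apply] at h)
    have hgeom (n : ℕ) : c n = μ ^ n * c 0 := by
      induction n with
      | zero => simp
      | succ n ihn =>
        have hrec := congrFun hstep n
        rw [aeval_X_sub_C_seqShift_apply, Pi.zero_apply, sub_eq_zero] at hrec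
        rw [hrec, ihn, pow_succ']
        ring
    obtain ⟨B, hB⟩ := hc
    have hc0 : c 0 = 0 := by
      by_contra hc0
      obtain ⟨n, hn⟩ := pow_unbounded_of_one_lt (B / ‖c 0‖) hμ
      have := hB n
      rw [hgeom n, norm_mul, norm_pow, ← le_div_iff₀ (norm_pos_iff.2 hc0)] at this
      linarith
    funext n
    rw [hgeom n, hc0, mul_zero, Pi.zero_apply]

lemma tendsto_zero_of_tendsto_succ_sub_mul {μ : 𝕜} (hμ : ‖μ‖ < 1) {u : ℕ → 𝕜}
    (h : Tendsto (fun n => u (n + 1) - μ * u n) atTop (𝓝 0)) : Tendsto u atTop (𝓝 0) := by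
  set r := ‖μ‖
  refine Metric.tendsto_nhds.2 fun ε hε => ?_
  obtain ⟨N, hN⟩ := eventually_atTop.1 (Metric.tendsto_nhds.1 h ((1 - r) * ε / 2) (by
    have : 0 < 1 - r := by linarith
    positivity))
  -- the excess of `‖u n‖` over `ε / 2` decays geometrically from `N` on
  have hdecay (k : ℕ) : ‖u (N + k)‖ - ε / 2 ≤ r ^ k * (‖u N‖ - ε / 2) := by
    induction k with
    | zero => simp
    | succ k ih =>
      have he := hN (N + k) (by omega)
      rw [dist_zero_right] at he
      have hstep : ‖u (N + k + 1)‖ ≤ r * ‖u (N + k)‖ + ‖u (N + k + 1) - μ * u (N + k)‖ :=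
        calc ‖u (N + k + 1)‖ = ‖μ * u (N + k) + (u (N + k + 1) - μ * u (N + k))‖ := by
              rw [add_sub_cancel]
          _ ≤ r * ‖u (N + k)‖ + ‖u (N + k + 1) - μ * u (N + k)‖ :=
              (norm_add_le _ _).trans (add_le_add_left (norm_mul_le _ _) _)
      rw [← add_assoc, pow_succ', mul_assoc]
      nlinarith [mul_le_mul_of_nonneg_left ih (norm_nonneg μ)]
  have hpow : Tendsto (fun k => r ^ k * (‖u N‖ - ε / 2)) atTop (𝓝 0) := by
    simpa using (tendsto_pow_atTop_nhds_zero_of_lt_one (norm_nonneg μ) hμ).mul_const _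
  obtain ⟨K, hK⟩ := eventually_atTop.1 (hpow.eventually (gt_mem_nhds (half_pos hε)))
  filter_upwards [eventually_ge_atTop (N + K)] with n hn
  obtain ⟨k, rfl⟩ := Nat.exists_eq_add_of_le (le_trans (Nat.le_add_right N K) hn)
  rw [dist_zero_right]
  linarith [hdecay k, hK k (by omega)]

lemma tendsto_zero_of_tendsto_aeval_multiset_prod (s : Multiset 𝕜) (hs : ∀ μ ∈ s, ‖μ‖ < 1)
    {c : ℕ → 𝕜} (h : Tendsto (aeval (seqShift 𝕜) (s.map (X - C ·)).prod c) atTop (𝓝 0)) :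
    Tendsto c atTop (𝓝 0) := by
  induction s using Multiset.induction_on with
  | empty => simpa using h
  | cons μ s ih =>
    rw [Multiset.map_cons, Multiset.prod_cons, map_mul, Module.End.mul_apply] at h
    refine ih (fun ν hν => hs ν (Multiset.mem_cons_of_mem hν))
      (tendsto_zero_of_tendsto_succ_sub_mul (hs μ (Multiset.mem_cons_self _ _)) ?_)
    convert h using 1
    funext n
    exact (aeval_X_sub_C_seqShift_apply _ _ _).symm

variable [IsAlgClosed 𝕜]

lemma tendsto_zero_of_tendsto_aeval_seqShift {p : 𝕜[X]} (hp : p ≠ 0)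
    (hroots : ∀ μ, p.IsRoot μ → ‖μ‖ < 1) {c : ℕ → 𝕜}
    (h : Tendsto (aeval (seqShift 𝕜) p c) atTop (𝓝 0)) : Tendsto c atTop (𝓝 0) := by
  rw [← C_leadingCoeff_mul_prod_multiset_X_sub_C (IsAlgClosed.card_roots_eq_natDegree (p := p)),
    map_mul, Module.End.mul_apply, aeval_C, Module.algebraMap_end_apply] at h
  have h' := h.const_smul p.leadingCoeff⁻¹
  simp only [Pi.smul_apply, inv_smul_smul₀ (leadingCoeff_ne_zero.2 hp), smul_zero] at h'
  exact tendsto_zero_of_tendsto_aeval_multiset_prod _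
    (fun μ hμ => hroots μ (isRoot_of_mem_roots hμ)) h'

theorem tendsto_zero_of_aeval_seqShift_eq_zero {p : 𝕜[X]} (hp : p ≠ 0) {lam : 𝕜}
    (hlam : 1 < ‖lam‖) (hroots : ∀ μ, p.IsRoot μ → μ ≠ lam → ‖μ‖ < 1) {c : ℕ → 𝕜}
    (hc : ∃ B, ∀ n, ‖c n‖ ≤ B) (h : aeval (seqShift 𝕜) p c = 0) : Tendsto c atTop (𝓝 0) := by
  -- with `p = (X - C lam) ^ k * q`, the bounded sequence `q(shift) c` is killed by
  -- `(shift - lam) ^ k`, whose nonzero solutions grow like `lam ^ n`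
  obtain ⟨q, hpq, hq⟩ := p.exists_eq_pow_rootMultiplicity_mul_and_not_dvd hp lam
  have hq0 : q ≠ 0 := by rintro rfl; exact hq (dvd_zero _)
  have hzero : aeval (seqShift 𝕜) q c = 0 :=
    eq_zero_of_aeval_X_sub_C_pow_eq_zero hlam _ (exists_bound_aeval_seqShift q hc)
      (by rw [← Module.End.mul_apply, ← map_mul, ← hpq, h])
  refine tendsto_zero_of_tendsto_aeval_seqShift hq0 (fun μ hμ => hroots μ ?_ ?_) ?_
  · rw [hpq, IsRoot, eval_mul, hμ.eq_zero, mul_zero]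
  · rintro rfl; exact hq (dvd_iff_isRoot.2 hμ)
  · rw [hzero]; exact tendsto_const_nhds

end Analysis

lemma exists_isIdempotentElem_pow {M : Type*} [Monoid M] [Finite M] (a : M) :
    ∃ m ≠ 0, IsIdempotentElem (a ^ m) := by
  -- Ellis–Numakura for the discrete topology
  let : TopologicalSpace M := ⊥
  have : DiscreteTopology M := ⟨rfl⟩
  obtain ⟨e, ⟨n, rfl⟩, he⟩ := exists_idempotent_in_compact_subsemigroup
    (fun _ => continuous_of_discreteTopology) (Set.range fun n : ℕ => a ^ (n + 1))
    (Set.range_nonempty _) (Set.toFinite _).isCompact (by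
      rintro _ ⟨i, rfl⟩ _ ⟨j, rfl⟩
      exact ⟨i + j + 1, by rw [← pow_add]; ring_nf⟩)
  exact ⟨n + 1, n.succ_ne_zero, he⟩

lemma exists_isIdempotentElem_pow_and {M : Type*} [Monoid M] [Finite M] (a b : M) :
    ∃ m ≠ 0, IsIdempotentElem (a ^ m) ∧ IsIdempotentElem (b ^ m) := by
  obtain ⟨k, hk, ha⟩ := exists_isIdempotentElem_pow a
  obtain ⟨l, hl, hb⟩ := exists_isIdempotentElem_pow b
  refine ⟨k * l, mul_ne_zero hk hl, ?_, ?_⟩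
  · rwa [pow_mul, ha.pow_eq hl]
  · rwa [mul_comm, pow_mul, hb.pow_eq hk]

namespace Function

variable {α : Type*}

lemma exists_iterate_isIdempotentElem [Finite α] (f g : α → α) :
    ∃ m ≠ 0, IsIdempotentElem (M := Function.End α) f^[m] ∧
      IsIdempotentElem (M := Function.End α) g^[m] :=
  haveI : Finite (Function.End α) := inferInstanceAs (Finite (α → α))
  exists_isIdempotentElem_pow_and (M := Function.End α) f g

variable {f : α → α} {m : ℕ}

lemma iterate_mul_of_isIdempotentElem (hf : IsIdempotentElem (M := Function.End α) f^[m])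
    {k : ℕ} (hk : k ≠ 0) : f^[m * k] = f^[m] := by
  rw [iterate_mul]
  exact hf.pow_eq hk

lemma iterate_iterate_of_isIdempotentElem (hf : IsIdempotentElem (M := Function.End α) f^[m])
    (x : α) : f^[m] (f^[m] x) = f^[m] x :=
  congrFun hf x

lemma mem_iInter_range_iterate_iff (hm : m ≠ 0)
    (hf : IsIdempotentElem (M := Function.End α) f^[m]) {x : α} :
    x ∈ ⋂ n, Set.range f^[n] ↔ f^[m] x = x := by
  refine ⟨fun hx => ?_, fun hx => Set.mem_iInter.2 fun n => ?_⟩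
  · obtain ⟨y, rfl⟩ := Set.mem_iInter.1 hx m
    exact iterate_iterate_of_isIdempotentElem hf y
  · refine ⟨f^[m * n - n] x, ?_⟩
    have hn : n ≤ m * n := Nat.le_mul_of_pos_left n (Nat.pos_of_ne_zero hm)
    rw [← iterate_add_apply, Nat.add_sub_cancel' hn, iterate_mul, iterate_fixed hx]

end Function

lemma List.sum_map_sub_of_isChain {α M : Type*} [AddCommGroup M] {f g : α → M} {l : List α}
    (hl : l ≠ []) (h : l.IsChain fun a b => f a = g b) :
    (l.map fun a => f a - g a).sum = f (l.getLast hl) - g (l.head hl) := by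
  induction l with
  | nil => exact absurd rfl hl
  | cons a t ih =>
    cases t with
    | nil => simp
    | cons b t =>
      rw [List.isChain_cons_cons] at h
      rw [List.map_cons, List.sum_cons, ih (List.cons_ne_nil _ _) h.2, List.getLast_cons_cons,
        List.head_cons, List.head_cons, ← h.1]
      abel

section PisotMatrix

open Polynomial Filter Topology Matrix

theorem eventually_vecMul_pow_apply_eq_zero {ι : Type*} [Fintype ι] [DecidableEq ι]
    (A : Matrix ι ι ℤ) {lam : ℂ} (hlam : 1 < ‖lam‖)
    (hroots : ∀ μ, (A.map (Int.cast : ℤ → ℂ)).charpoly.IsRoot μ → μ ≠ lam → ‖μ‖ < 1)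
    (v : ι → ℤ) (x : ι) {B : ℤ} (hB : ∀ n, |(v ᵥ* A ^ n) x| ≤ B) :
    ∀ᶠ n in atTop, (v ᵥ* A ^ n) x = 0 := by
  set A' := A.map (Int.cast : ℤ → ℂ)
  have hcast (n : ℕ) : (((v ᵥ* A ^ n) x : ℤ) : ℂ) = ((Int.cast ∘ v) ᵥ* A' ^ n) x := by
    have := RingHom.map_vecMul (Int.castRingHom ℂ) (A ^ n) v x
    rwa [Matrix.map_pow] at this
  have hrec : aeval (seqShift ℂ) A'.charpoly (fun n => (((v ᵥ* A ^ n) x : ℤ) : ℂ)) = 0 := by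
    simp only [hcast, aeval_seqShift_vecMul_pow, Matrix.aeval_self_charpoly, mul_zero,
      vecMul_zero]
    rfl
  have hbdd : ∃ C, ∀ n, ‖(((v ᵥ* A ^ n) x : ℤ) : ℂ)‖ ≤ C :=
    ⟨B, fun n => by rw [Complex.norm_intCast]; exact_mod_cast hB n⟩
  have hlim :=
    tendsto_zero_of_aeval_seqShift_eq_zero A'.charpoly_monic.ne_zero hlam hroots hbdd hrec
  filter_upwards [Metric.tendsto_nhds.1 hlim 1 one_pos] with n hn
  rw [dist_zero_right, Complex.norm_intCast] at hn
  exact Int.abs_lt_one_iff.1 (by exact_mod_cast hn)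

end PisotMatrix

namespace SubstSp

section

open Filter Matrix

variable {d : ℕ} (φ : Fin d → List (Fin d))

lemma apply_append (u v : List (Fin d)) : apply φ (u ++ v) = apply φ u ++ apply φ v :=
  List.flatMap_append

lemma apply_ne_nil (hne : ∀ a, φ a ≠ []) {w : List (Fin d)} (hw : w ≠ []) : apply φ w ≠ [] := by
  obtain ⟨a, t, rfl⟩ := List.exists_cons_of_ne_nil hw
  simp [apply, List.flatMap_cons, hne a]

lemma iter_succ (n : ℕ) (w : List (Fin d)) : iter φ (n + 1) w = apply φ (iter φ n w) :=
  Function.iterate_succ_apply' _ _ _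

lemma iter_add (m n : ℕ) (w : List (Fin d)) : iter φ (m + n) w = iter φ m (iter φ n w) :=
  Function.iterate_add_apply _ _ _ _

lemma iter_append (n : ℕ) (u v : List (Fin d)) :
    iter φ n (u ++ v) = iter φ n u ++ iter φ n v := by
  induction n with
  | zero => rfl
  | succ n ih => rw [iter_succ, ih, apply_append, ← iter_succ, ← iter_succ]

lemma iter_ne_nil (hne : ∀ a, φ a ≠ []) {w : List (Fin d)} (hw : w ≠ []) (n : ℕ) :
    iter φ n w ≠ [] := by
  induction n with
  | zero => exact hw
  | succ n ih => rw [iter_succ]; exact apply_ne_nil φ hne ih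

lemma iter_singleton_ne_nil (hne : ∀ a, φ a ≠ []) (n : ℕ) (a : Fin d) : iter φ n [a] ≠ [] :=
  iter_ne_nil φ hne (List.cons_ne_nil _ _) n

lemma iter_singleton_mem_lang (hne : ∀ a, φ a ≠ []) (n : ℕ) (a : Fin d) :
    iter φ n [a] ∈ Lang φ :=
  ⟨iter_singleton_ne_nil φ hne n a, a, n, List.infix_refl _⟩

lemma mem_lang_of_infix {v w : List (Fin d)} (hv : v ≠ []) (hvw : v <:+: w) (hw : w ∈ Lang φ) :
    v ∈ Lang φ :=
  ⟨hv, hw.2.imp fun _ => Exists.imp fun _ => hvw.trans⟩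

lemma iter_mem_lang (hne : ∀ a, φ a ≠ []) {w : List (Fin d)} (hw : w ∈ Lang φ) (n : ℕ) :
    iter φ n w ∈ Lang φ := by
  obtain ⟨hwne, i, k, s, t, h⟩ := hw
  refine ⟨iter_ne_nil φ hne hwne n, i, n + k, iter φ n s, iter φ n t, ?_⟩
  rw [iter_add, ← h, iter_append, iter_append]

lemma isChain_of_mem_lang {w : List (Fin d)} (hw : w ∈ Lang φ) :
    w.IsChain fun a b => [a, b] ∈ Lang φ :=
  List.isChain_iff_forall_rel_of_append_cons_cons.2 fun a b l₁ l₂ h =>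
    mem_lang_of_infix φ (List.cons_ne_nil _ _) ⟨l₁, l₂, by simp [h]⟩ hw

lemma iter_succ_singleton (n : ℕ) (a : Fin d) : iter φ (n + 1) [a] = iter φ n (φ a) := by
  rw [iter, Function.iterate_succ_apply, ← iter, apply, List.flatMap_singleton]

lemma exists_iter_eq_cons (hne : ∀ a, φ a ≠ []) (n : ℕ) (a : Fin d) :
    ∃ t, iter φ n [a] = (plusMap φ hne)^[n] a :: t := by
  induction n generalizing a with
  | zero => exact ⟨[], rfl⟩
  | succ n ih =>
    obtain ⟨t, ht⟩ := ih (plusMap φ hne a)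
    obtain ⟨r, hr⟩ : ∃ r, φ a = plusMap φ hne a :: r := ⟨_, (List.cons_head_tail (hne a)).symm⟩
    refine ⟨t ++ iter φ n r, ?_⟩
    rw [iter_succ_singleton, hr, ← List.singleton_append, iter_append, ht]
    rfl

lemma exists_iter_eq_concat (hne : ∀ a, φ a ≠ []) (n : ℕ) (a : Fin d) :
    ∃ t, iter φ n [a] = t ++ [(minusMap φ hne)^[n] a] := by
  induction n generalizing a with
  | zero => exact ⟨[], rfl⟩
  | succ n ih =>
    obtain ⟨t, ht⟩ := ih (minusMap φ hne a)
    obtain ⟨r, hr⟩ : ∃ r, φ a = r ++ [minusMap φ hne a] :=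
      ⟨_, (List.dropLast_append_getLast (hne a)).symm⟩
    refine ⟨iter φ n r ++ t, ?_⟩
    rw [iter_succ_singleton, hr, iter_append, ht, List.append_assoc]
    rfl

lemma head_iter (hne : ∀ a, φ a ≠ []) (n : ℕ) (a : Fin d) :
    (iter φ n [a]).head (iter_singleton_ne_nil φ hne n a) = (plusMap φ hne)^[n] a := by
  obtain ⟨t, ht⟩ := exists_iter_eq_cons φ hne n a
  simp only [ht, List.head_cons]

lemma getLast_iter (hne : ∀ a, φ a ≠ []) (n : ℕ) (a : Fin d) :
    (iter φ n [a]).getLast (iter_singleton_ne_nil φ hne n a) = (minusMap φ hne)^[n] a := by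
  obtain ⟨t, ht⟩ := exists_iter_eq_concat φ hne n a
  simp only [ht, List.getLast_concat]

lemma minusMap_plusMap_iterate_mem_lang (hne : ∀ a, φ a ≠ []) {x y : Fin d}
    (hxy : [x, y] ∈ Lang φ) (n : ℕ) :
    [(minusMap φ hne)^[n] x, (plusMap φ hne)^[n] y] ∈ Lang φ := by
  obtain ⟨s, hs⟩ := exists_iter_eq_concat φ hne n x
  obtain ⟨t, ht⟩ := exists_iter_eq_cons φ hne n y
  refine mem_lang_of_infix φ (List.cons_ne_nil _ _) ⟨s, t, ?_⟩ (iter_mem_lang φ hne hxy n)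
  rw [show [x, y] = [x] ++ [y] from rfl, iter_append, hs, ht]
  simp

lemma iff_of_primitive (hne : ∀ a, φ a ≠ []) (hprim : Primitive φ) {P : Fin d → Prop}
    (hP : ∀ a b, [a, b] ∈ Lang φ → (P a ↔ P b)) (a b : Fin d) : P a ↔ P b := by
  obtain ⟨N, hN⟩ := hprim
  have hchain := isChain_of_mem_lang φ (iter_singleton_mem_lang φ hne N a)
  have hconst := hchain.induction (fun c => P c ↔ P ((plusMap φ hne)^[N] a)) _
    (fun c c' hcc' hc => (hP c c' hcc').symm.trans hc) (fun _ => by rw [head_iter])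
  exact (hconst a (hN N le_rfl a a)).trans (hconst b (hN N le_rfl b a)).symm

lemma sum_map_apply {M : Type*} [AddCommMonoid M] (w : List (Fin d)) (z : Fin d → M) :
    ((apply φ w).map z).sum = (w.map fun a => ((φ a).map z).sum).sum := by
  simp [apply, List.flatMap, Function.comp_def]

lemma vecMul_abel (z : Fin d → ℤ) : z ᵥ* abel φ = fun a => ((φ a).map z).sum := by
  classical
  funext a
  rw [Finset.sum_list_map_count, Finset.sum_subset (Finset.subset_univ _)]
  · simp [vecMul, dotProduct, abel, mul_comm]
  · intro i _ hi
    simp [List.count_eq_zero.2 (mt List.mem_toFinset.2 hi)]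

lemma vecMul_abel_pow_apply (z : Fin d → ℤ) (n : ℕ) (x : Fin d) :
    (z ᵥ* abel φ ^ n) x = ((iter φ n [x]).map z).sum := by
  induction n generalizing z with
  | zero => simp [iter]
  | succ n ih =>
    rw [pow_succ', ← vecMul_vecMul, ih, iter_succ, sum_map_apply, vecMul_abel]

lemma vecMul_abel_pow_apply_sub (hne : ∀ a, φ a ≠ []) {f g : Fin d → ℤ}
    (hfg : ∀ a b, [a, b] ∈ Lang φ → f a = g b) (n : ℕ) (x : Fin d) :
    ((f - g) ᵥ* abel φ ^ n) x = f ((minusMap φ hne)^[n] x) - g ((plusMap φ hne)^[n] x) := by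
  rw [vecMul_abel_pow_apply, ← getLast_iter φ hne, ← head_iter φ hne,
    ← List.sum_map_sub_of_isChain]
  · rfl
  · exact (isChain_of_mem_lang φ (iter_singleton_mem_lang φ hne n x)).imp fun a b => hfg a b

theorem eventually_iff_minusMap_plusMap_iterate (hne : ∀ a, φ a ≠ []) {lam : ℝ} (hlam : 1 < lam)
    (hsmall : ∀ μ : ℂ, IsEigenvalue (abel φ) μ → μ ≠ lam → ‖μ‖ < 1) {P Q : Fin d → Prop}
    (hPQ : ∀ a b, [a, b] ∈ Lang φ → (P a ↔ Q b)) (x : Fin d) :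
    ∀ᶠ n in atTop, (P ((minusMap φ hne)^[n] x) ↔ Q ((plusMap φ hne)^[n] x)) := by
  classical
  let f a : ℤ := if P a then 1 else 0
  let g a : ℤ := if Q a then 1 else 0
  have hfg : ∀ a b, [a, b] ∈ Lang φ → f a = g b := fun a b h => if_congr (hPQ a b h) rfl rfl
  have hB (n : ℕ) : |((f - g) ᵥ* abel φ ^ n) x| ≤ 1 := by
    rw [vecMul_abel_pow_apply_sub φ hne hfg]
    simp only [f, g]
    split_ifs <;> simp
  have hlam' : 1 < ‖(lam : ℂ)‖ := by rwa [Complex.norm_real, Real.norm_of_nonneg (by linarith)]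
  filter_upwards [eventually_vecMul_pow_apply_eq_zero _ hlam' hsmall _ x hB] with n hn
  rw [vecMul_abel_pow_apply_sub φ hne hfg, sub_eq_zero] at hn
  by_cases hP : P ((minusMap φ hne)^[n] x) <;> by_cases hQ : Q ((plusMap φ hne)^[n] x) <;>
    simp_all [f, g]

variable (hne : ∀ a, φ a ≠ [])

def fstClass (p : Fin d × Fin d) : Set (Fin d) :=
  {a | ∃ b, (a, b) ∈ Pphi φ hne ∧ Relation.EqvGen (prel φ hne) p (a, b)}

def sndClass (p : Fin d × Fin d) : Set (Fin d) :=
  {b | ∃ a, (a, b) ∈ Pphi φ hne ∧ Relation.EqvGen (prel φ hne) p (a, b)}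

variable {φ hne}

lemma fst_mem_fstClass_iff {p q : Fin d × Fin d} (hq : q ∈ Pphi φ hne) :
    q.1 ∈ fstClass φ hne p ↔ Relation.EqvGen (prel φ hne) p q :=
  ⟨fun ⟨_, hb, h⟩ => h.trans _ _ _ (.rel _ _ ⟨hb, hq, Or.inl rfl⟩), fun h => ⟨q.2, hq, h⟩⟩

lemma snd_mem_sndClass_iff {p q : Fin d × Fin d} (hq : q ∈ Pphi φ hne) :
    q.2 ∈ sndClass φ hne p ↔ Relation.EqvGen (prel φ hne) p q :=
  ⟨fun ⟨_, ha, h⟩ => h.trans _ _ _ (.rel _ _ ⟨ha, hq, Or.inr rfl⟩), fun h => ⟨q.1, hq, h⟩⟩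

lemma iterate_pair_mem_Pphi {m : ℕ} (hm : m ≠ 0)
    (hF : IsIdempotentElem (M := Function.End (Fin d)) (minusMap φ hne)^[m])
    (hG : IsIdempotentElem (M := Function.End (Fin d)) (plusMap φ hne)^[m])
    {x y : Fin d} (hxy : [x, y] ∈ Lang φ) :
    ((minusMap φ hne)^[m] x, (plusMap φ hne)^[m] y) ∈ Pphi φ hne :=
  ⟨(Function.mem_iInter_range_iterate_iff hm hF).2
      (Function.iterate_iterate_of_isIdempotentElem hF x),
    (Function.mem_iInter_range_iterate_iff hm hG).2
      (Function.iterate_iterate_of_isIdempotentElem hG y),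
    minusMap_plusMap_iterate_mem_lang φ hne hxy m⟩

lemma iterate_mem_fstClass_iff_iterate_mem_sndClass_of_mem_lang {m : ℕ} (hm : m ≠ 0)
    (hF : IsIdempotentElem (M := Function.End (Fin d)) (minusMap φ hne)^[m])
    (hG : IsIdempotentElem (M := Function.End (Fin d)) (plusMap φ hne)^[m])
    (p : Fin d × Fin d) {a b : Fin d} (hab : [a, b] ∈ Lang φ) :
    (minusMap φ hne)^[m] a ∈ fstClass φ hne p ↔ (plusMap φ hne)^[m] b ∈ sndClass φ hne p :=
  have h := iterate_pair_mem_Pphi hm hF hG hab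
  (fst_mem_fstClass_iff h).trans (snd_mem_sndClass_iff h).symm

lemma iterate_mem_fstClass_iff_iterate_mem_sndClass {lam : ℝ} (hlam : 1 < lam)
    (hsmall : ∀ μ : ℂ, IsEigenvalue (abel φ) μ → μ ≠ lam → ‖μ‖ < 1) {m : ℕ} (hm : m ≠ 0)
    (hF : IsIdempotentElem (M := Function.End (Fin d)) (minusMap φ hne)^[m])
    (hG : IsIdempotentElem (M := Function.End (Fin d)) (plusMap φ hne)^[m])
    (p : Fin d × Fin d) (x : Fin d) :
    (minusMap φ hne)^[m] x ∈ fstClass φ hne p ↔ (plusMap φ hne)^[m] x ∈ sndClass φ hne p := by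
  obtain ⟨N, hN⟩ := eventually_atTop.1 <| eventually_iff_minusMap_plusMap_iterate φ hne hlam
    hsmall (fun _ _ => iterate_mem_fstClass_iff_iterate_mem_sndClass_of_mem_lang hm hF hG p) x
  -- along multiples of `m`, the iterates of `φ⁻` and `φ⁺` are those of exponent `m`
  have h := hN (m * (N + 1)) (by nlinarith [Nat.pos_of_ne_zero hm])
  rwa [Function.iterate_mul_of_isIdempotentElem hF N.succ_ne_zero,
    Function.iterate_mul_of_isIdempotentElem hG N.succ_ne_zero,
    Function.iterate_iterate_of_isIdempotentElem hF,
    Function.iterate_iterate_of_isIdempotentElem hG] at h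

end

theorem Pphi_single_class_general (d : ℕ) (φ : Fin d → List (Fin d))
    (hne : ∀ a, φ a ≠ []) (hWP : WeakPisot φ) :
    ∀ p q : Fin d × Fin d, p ∈ Pphi φ hne → q ∈ Pphi φ hne →
      Relation.EqvGen (prel φ hne) p q := by
  intro p q hp hq
  obtain ⟨hprim, -, lam, hlam, -, hsmall⟩ := hWP
  obtain ⟨m, hm, hF, hG⟩ :=
    Function.exists_iterate_isIdempotentElem (minusMap φ hne) (plusMap φ hne)
  have hpq := iff_of_primitive φ hne hprim
    (P := fun a => (minusMap φ hne)^[m] a ∈ fstClass φ hne p) (fun a b hab =>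
      (iterate_mem_fstClass_iff_iterate_mem_sndClass_of_mem_lang hm hF hG p hab).trans
        (iterate_mem_fstClass_iff_iterate_mem_sndClass hlam hsmall hm hF hG p b).symm) p.1 q.1
  rw [(Function.mem_iInter_range_iterate_iff hm hF).1 hp.1,
    (Function.mem_iInter_range_iterate_iff hm hF).1 hq.1] at hpq
  exact (fst_mem_fstClass_iff hq).1 (hpq.1 ((fst_mem_fstClass_iff hp).2 (.refl p)))

/-- If `φ` is weak Pisot (with `d ≥ 2`), then `𝒫_φ` consists of a single
equivalence class: any two of its elements are equivalent under the equivalence relation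
generated by agreement in either coordinate. -/
theorem Pphi_single_class (d : ℕ) (hd : 2 ≤ d) (φ : Fin d → List (Fin d))
    (hne : ∀ a, φ a ≠ []) (hWP : WeakPisot φ) :
    ∀ p q : Fin d × Fin d, p ∈ Pphi φ hne → q ∈ Pphi φ hne →
      Relation.EqvGen (prel φ hne) p q :=
  Pphi_single_class_general d φ hne hWP

end SubstSp
end

section
/- Let M be an m×m nonnegative real matrix in block upper-triangular form M = [[A, B],[0, C]], where A is d×d with 1 ≤ d < m. Suppose there is a strictly positive row vector (ω_L, v) ∈ ℝ^d × ℝ^{m−d} and a real number λ > 0 with (ω_L, v)·M = λ·(ω_L, v), and suppose there is M₀ ∈ ℕ such that for every n ≥ M₀ the upper-right d×(m−d) block of Mⁿ is strictly positive. Then the spectral radius of C is strictly less than λ. -/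
/-!
Raise `M` to the power `n = M₀`. Its lower-right block is `Cⁿ`, and reading the eigenvector equation
`w Mⁿ = λⁿ w` in the columns of that block, the strictly positive upper-right block of `Mⁿ` makes
`v Cⁿ < λⁿ v` entrywise, with `v` the lower part of `w`. If `Cu = μu` with `u ≠ 0`, then
`|μ|ⁿ |u| ≤ Cⁿ |u|` entrywise, and pairing with `v` gives `|μ|ⁿ (v ⬝ |u|) < λⁿ (v ⬝ |u|)`,
so `|μ| < λ`.
-/

open Matrix

namespace Matrix

variable {l m ι α : Type*}

theorem fromBlocks_zero₂₁_pow [Semiring α] [Fintype l] [Fintype m] [DecidableEq l] [DecidableEq m]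
    (A : Matrix l l α) (B : Matrix l m α) (D : Matrix m m α) (n : ℕ) :
    ∃ Bₙ, fromBlocks A B 0 D ^ n = fromBlocks (A ^ n) Bₙ 0 (D ^ n) := by
  induction n with
  | zero => exact ⟨0, by simp⟩
  | succ n ih =>
    obtain ⟨Bₙ, h⟩ := ih
    exact ⟨A ^ n * B + Bₙ * D, by simp [pow_succ, h, fromBlocks_multiply]⟩

theorem toBlocks₂₂_pow_of_toBlocks₂₁_eq_zero [Semiring α] [Fintype l] [Fintype m]
    [DecidableEq l] [DecidableEq m] {M : Matrix (l ⊕ m) (l ⊕ m) α} (h : M.toBlocks₂₁ = 0)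
    (n : ℕ) : (M ^ n).toBlocks₂₂ = M.toBlocks₂₂ ^ n := by
  obtain ⟨Bₙ, hn⟩ := fromBlocks_zero₂₁_pow M.toBlocks₁₁ M.toBlocks₁₂ M.toBlocks₂₂ n
  rw [← h, fromBlocks_toBlocks] at hn
  rw [hn, toBlocks_fromBlocks₂₂]

theorem vecMul_pow_of_vecMul_eq_smul [Semiring α] [Fintype ι] [DecidableEq ι]
    {M : Matrix ι ι α} {w : ι → α} {c : α} (h : w ᵥ* M = c • w) (n : ℕ) :
    w ᵥ* (M ^ n) = c ^ n • w := by
  induction n with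
  | zero => simp
  | succ n ih => rw [pow_succ, ← vecMul_vecMul, ih, smul_vecMul, h, smul_smul, ← pow_succ]

theorem pow_mulVec_of_mulVec_eq_smul [CommSemiring α] [Fintype ι] [DecidableEq ι]
    {M : Matrix ι ι α} {u : ι → α} {c : α} (h : M *ᵥ u = c • u) (n : ℕ) :
    (M ^ n) *ᵥ u = c ^ n • u := by
  induction n with
  | zero => simp
  | succ n ih => rw [pow_succ, ← mulVec_mulVec, h, mulVec_smul, ih, smul_smul, ← pow_succ']

theorem exists_mulVec_eq_smul_of_isRoot_charpoly {K : Type*} [Field K] [Fintype ι]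
    [DecidableEq ι] {A : Matrix ι ι K} {μ : K} (h : A.charpoly.IsRoot μ) :
    ∃ u ≠ 0, A *ᵥ u = μ • u := by
  rw [← mem_spectrum_iff_isRoot_charpoly, ← spectrum_toLin',
    ← Module.End.hasEigenvalue_iff_mem_spectrum] at h
  obtain ⟨u, hu⟩ := h.exists_hasEigenvector
  exact ⟨u, hu.2, hu.apply_eq_smul⟩

theorem vecMul_toBlocks₂₂_lt_of_vecMul_eq_smul [Semiring α] [PartialOrder α]
    [IsStrictOrderedRing α] [Fintype l] [Fintype m] [Nonempty l]
    {M : Matrix (l ⊕ m) (l ⊕ m) α} (hB : ∀ i j, 0 < M.toBlocks₁₂ i j) {w : l ⊕ m → α}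
    (hw : ∀ i, 0 < w i) {c : α} (h : w ᵥ* M = c • w) (k : m) :
    ((w ∘ Sum.inr) ᵥ* M.toBlocks₂₂) k < c * w (Sum.inr k) := by
  have hk := congrFun h (Sum.inr k)
  rw [← fromBlocks_toBlocks M, vecMul_fromBlocks] at hk
  have hpos : 0 < ((w ∘ Sum.inl) ᵥ* M.toBlocks₁₂) k :=
    Finset.sum_pos (fun i _ ↦ mul_pos (hw _) (hB i k)) Finset.univ_nonempty
  calc _ < ((w ∘ Sum.inl) ᵥ* M.toBlocks₁₂) k + ((w ∘ Sum.inr) ᵥ* M.toBlocks₂₂) k :=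
        lt_add_of_pos_left _ hpos
    _ = c * w (Sum.inr k) := hk

theorem norm_mul_le_mulVec_norm [Fintype ι] {C : Matrix ι ι ℝ} (hC : ∀ i j, 0 ≤ C i j)
    {u : ι → ℂ} {μ : ℂ} (h : C.map Complex.ofReal *ᵥ u = μ • u) (j : ι) :
    ‖μ‖ * ‖u j‖ ≤ (C *ᵥ fun k ↦ ‖u k‖) j :=
  calc ‖μ‖ * ‖u j‖ = ‖∑ k, (C j k : ℂ) * u k‖ := by
        rw [← norm_mul, ← smul_eq_mul, ← Pi.smul_apply, ← h]; rfl
    _ ≤ ∑ k, ‖(C j k : ℂ) * u k‖ := norm_sum_le _ _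
    _ = (C *ᵥ fun k ↦ ‖u k‖) j := by
        simp only [norm_mul, Complex.norm_real, Real.norm_of_nonneg (hC _ _)]; rfl

theorem norm_lt_of_mulVec_eq_smul_of_vecMul_lt [Fintype ι] {C : Matrix ι ι ℝ}
    (hC : ∀ i j, 0 ≤ C i j) {v : ι → ℝ} (hv : ∀ i, 0 < v i) {r : ℝ}
    (hvC : ∀ j, (v ᵥ* C) j < r * v j) {u : ι → ℂ} (hu : u ≠ 0) {μ : ℂ}
    (h : C.map Complex.ofReal *ᵥ u = μ • u) : ‖μ‖ < r := by
  set a : ι → ℝ := fun k ↦ ‖u k‖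
  obtain ⟨k₀, hk₀⟩ := Function.ne_iff.mp hu
  have ha₀ : 0 < a k₀ := norm_pos_iff.mpr hk₀
  have hva : 0 < v ⬝ᵥ a :=
    Finset.sum_pos' (fun k _ ↦ mul_nonneg (hv k).le (norm_nonneg _))
      ⟨k₀, Finset.mem_univ _, mul_pos (hv k₀) ha₀⟩
  refine lt_of_mul_lt_mul_right ?_ hva.le
  calc ‖μ‖ * (v ⬝ᵥ a) = v ⬝ᵥ (‖μ‖ • a) := by rw [dotProduct_smul, smul_eq_mul]
    _ ≤ v ⬝ᵥ (C *ᵥ a) :=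
        dotProduct_le_dotProduct_of_nonneg_left (norm_mul_le_mulVec_norm hC h) fun i ↦ (hv i).le
    _ = (v ᵥ* C) ⬝ᵥ a := dotProduct_mulVec _ _ _
    _ < (r • v) ⬝ᵥ a :=
        Finset.sum_lt_sum (fun k _ ↦ mul_le_mul_of_nonneg_right (hvC k).le (norm_nonneg _))
          ⟨k₀, Finset.mem_univ _, mul_lt_mul_of_pos_right (hvC k₀) ha₀⟩
    _ = r * (v ⬝ᵥ a) := by rw [smul_dotProduct, smul_eq_mul]

end Matrix

theorem spectralRadius_lower_block_lt_general
    (d e : ℕ) (hd : 0 < d)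
    (M : Matrix (Fin d ⊕ Fin e) (Fin d ⊕ Fin e) ℝ)
    (hMnonneg : ∀ i j, 0 ≤ M i j)
    (hblock : ∀ (i : Fin e) (j : Fin d), M (Sum.inr i) (Sum.inl j) = 0)
    (w : Fin d ⊕ Fin e → ℝ) (hw : ∀ i, 0 < w i)
    (lam : ℝ) (hlam : 0 < lam)
    (heig : w ᵥ* M = lam • w)
    (M₀ : ℕ) (hpos : ∀ n ≥ M₀, ∀ (i : Fin d) (j : Fin e), 0 < (M ^ n) (Sum.inl i) (Sum.inr j)) :
    ∀ μ : ℂ, ((M.submatrix Sum.inr Sum.inr).map (Complex.ofReal : ℝ → ℂ)).charpoly.IsRoot μ →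
      ‖μ‖ < lam := by
  intro μ hroot
  set C := M.toBlocks₂₂
  obtain ⟨u, hu, hCu⟩ := exists_mulVec_eq_smul_of_isRoot_charpoly hroot
  have hCn : (M ^ M₀).toBlocks₂₂ = C ^ M₀ :=
    toBlocks₂₂_pow_of_toBlocks₂₁_eq_zero (by ext i j; exact hblock i j) M₀
  have : Nonempty (Fin d) := Fin.pos_iff_nonempty.mp hd
  have hvC := vecMul_toBlocks₂₂_lt_of_vecMul_eq_smul (M := M ^ M₀) (hpos M₀ le_rfl) hw
    (vecMul_pow_of_vecMul_eq_smul heig M₀)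
  rw [hCn] at hvC
  have hCnu : (C ^ M₀).map Complex.ofReal *ᵥ u = μ ^ M₀ • u := by
    rw [show (C ^ M₀).map Complex.ofReal = C.map Complex.ofReal ^ M₀ from
      map_pow Complex.ofRealHom.mapMatrix C M₀]
    exact pow_mulVec_of_mulVec_eq_smul hCu M₀
  have hμ := norm_lt_of_mulVec_eq_smul_of_vecMul_lt
    (pow_apply_nonneg (fun i j ↦ hMnonneg _ _) M₀) (fun i ↦ hw _) hvC hu hCnu
  exact lt_of_pow_lt_pow_left₀ M₀ hlam.le (norm_pow μ M₀ ▸ hμ)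

theorem spectralRadius_lower_block_lt
    (d e : ℕ) (hd : 0 < d) (he : 0 < e)
    (M : Matrix (Fin d ⊕ Fin e) (Fin d ⊕ Fin e) ℝ)
    (hMnonneg : ∀ i j, 0 ≤ M i j)
    (hblock : ∀ (i : Fin e) (j : Fin d), M (Sum.inr i) (Sum.inl j) = 0)
    (w : Fin d ⊕ Fin e → ℝ) (hw : ∀ i, 0 < w i)
    (lam : ℝ) (hlam : 0 < lam)
    (heig : w ᵥ* M = lam • w)
    (M₀ : ℕ) (hpos : ∀ n ≥ M₀, ∀ (i : Fin d) (j : Fin e), 0 < (M ^ n) (Sum.inl i) (Sum.inr j)) :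
    ∀ μ : ℂ, ((M.submatrix Sum.inr Sum.inr).map (Complex.ofReal : ℝ → ℂ)).charpoly.IsRoot μ →
      ‖μ‖ < lam :=
  spectralRadius_lower_block_lt_general d e hd M hMnonneg hblock w hw lam hlam heig M₀ hpos
end

section
/- Let B and R be nonsingular d×d integer matrices such that ℤ^d ⊆ R(∪_{n≥0} B^{−n}ℤ^d), i.e., every integer vector is of the form R B^{−n} u for some n ≥ 0 and some u ∈ ℤ^d. If y ∈ ℝ^d satisfies Ry ∈ ℤ^d and By − y ∈ ℤ^d, then y ∈ ℤ^d. -/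
/- Statement 8: Arithmetic core of the asubharmonicity theorem.  If B, R are nonsingular
integer matrices with ℤ^d ⊆ R(∪_{n≥0} B^{-n} ℤ^d), and y ∈ ℝ^d satisfies Ry ∈ ℤ^d and
By - y ∈ ℤ^d, then y ∈ ℤ^d. -/

open Matrix

theorem asubharmonic_arithmetic_core
    (d : ℕ) (B R : Matrix (Fin d) (Fin d) ℤ)
    (hB : B.det ≠ 0) (hR : R.det ≠ 0)
    (hsub : ∀ z : Fin d → ℤ, ∃ (n : ℕ) (u : Fin d → ℤ),
      (R.map (Int.cast : ℤ → ℝ)) *ᵥ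
          (((B.map (Int.cast : ℤ → ℝ)) ^ n)⁻¹ *ᵥ fun i => (u i : ℝ)) =
        fun i => (z i : ℝ))
    (y : Fin d → ℝ)
    (hRy : ∀ i, ∃ m : ℤ, ((R.map (Int.cast : ℤ → ℝ)) *ᵥ y) i = (m : ℝ))
    (hBy : ∀ i, ∃ m : ℤ, ((B.map (Int.cast : ℤ → ℝ)) *ᵥ y) i - y i = (m : ℝ)) :
    ∀ i, ∃ m : ℤ, y i = (m : ℝ) := by
  classical
  set Bf := B.map (Int.cast : ℤ → ℝ) with hBf
  set Rf := R.map (Int.cast : ℤ → ℝ) with hRf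
  have hRdet : IsUnit Rf.det := by
    have : Rf.det = ((R.det : ℤ) : ℝ) := ((Int.castRingHom ℝ).map_det R).symm
    rw [this]
    exact isUnit_iff_ne_zero.mpr (by exact_mod_cast hR)
  have hBdet : IsUnit Bf.det := by
    have : Bf.det = ((B.det : ℤ) : ℝ) := ((Int.castRingHom ℝ).map_det B).symm
    rw [this]
    exact isUnit_iff_ne_zero.mpr (by exact_mod_cast hB)
  -- Ry is an integer vector
  choose zf hzf using hRy
  obtain ⟨n, u, hu⟩ := hsub zf
  have hz : Rf *ᵥ y = fun i => (zf i : ℝ) := funext hzf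
  have h1 : (Bf ^ n)⁻¹ *ᵥ (fun i => (u i : ℝ)) = y := by
    have heq : Rf *ᵥ ((Bf ^ n)⁻¹ *ᵥ fun i => (u i : ℝ)) = Rf *ᵥ y := hu.trans hz.symm
    have h2 := congrArg (fun v => Rf⁻¹ *ᵥ v) heq
    simp only [Matrix.mulVec_mulVec, ← Matrix.mul_assoc,
      Matrix.nonsing_inv_mul _ hRdet, Matrix.one_mul, Matrix.one_mulVec] at h2
    exact h2
  have hBn : IsUnit ((Bf ^ n).det) := by
    simpa [Matrix.det_pow] using hBdet.pow n
  have h2 : (Bf ^ n) *ᵥ y = fun i => (u i : ℝ) := by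
    have := congrArg (fun v => (Bf ^ n) *ᵥ v) h1
    simpa [Matrix.mulVec_mulVec, Matrix.mul_nonsing_inv _ hBn] using this.symm
  -- key: B^N y - y is integer for all N
  have key : ∀ N : ℕ, ∀ i, ∃ m : ℤ, ((Bf ^ N) *ᵥ y) i - y i = (m : ℝ) := by
    intro N
    induction N with
    | zero => intro i; exact ⟨0, by simp⟩
    | succ k ih =>
      choose m hm using ih
      choose e he using hBy
      intro i
      refine ⟨(B *ᵥ m) i + e i, ?_⟩
      have hpow : (Bf ^ (k + 1)) *ᵥ y = Bf *ᵥ ((Bf ^ k) *ᵥ y) := by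
        rw [Matrix.mulVec_mulVec, ← pow_succ']
      have hsplit : (Bf ^ k) *ᵥ y = fun j => y j + (m j : ℝ) := by
        funext j; have := hm j; linarith
      rw [hpow, hsplit]
      have hcast : (Bf *ᵥ fun j => (m j : ℝ)) i = ((B *ᵥ m) i : ℝ) := by
        simp [hBf, Matrix.mulVec, dotProduct]
      have hmulv : (Bf *ᵥ fun j => y j + (m j : ℝ)) i
          = (Bf *ᵥ y) i + (Bf *ᵥ fun j => (m j : ℝ)) i := by
        simp [Matrix.mulVec, dotProduct, mul_add, Finset.sum_add_distrib]
      rw [hmulv, hcast]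
      have := he i
      push_cast
      linarith
  intro i
  obtain ⟨m, hm⟩ := key n i
  refine ⟨u i - m, ?_⟩
  have hui : ((Bf ^ n) *ᵥ y) i = (u i : ℝ) := by rw [h2]
  push_cast
  linarith
end

section
/- Let M be a d×d integer matrix having a simple real eigenvalue λ > 1 with a strictly positive left eigenvector ω_L ∈ ℝ^d, and such that every other complex eigenvalue of M has modulus strictly less than 1. If z ∈ ℤ^d satisfies ⟨ω_L, z⟩ = 0, then Mⁿ z = 0 for some n ∈ ℕ; that is, z lies in the generalized null space of M. -/
/-!
Over `ℂ` write the characteristic polynomial of `M` as `(X - λ) * g` with `g(λ) ≠ 0`. By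
Cayley–Hamilton `g(M)` maps into the `λ`-eigenspace, which is a line since `λ` is simple, and
`ω_L ∘ g(M) = g(λ) ω_L`; so `ω_L` does not vanish on that line, while it kills `g(M) z`.
Hence `g(M) z = 0`. The roots of `g` are the remaining eigenvalues, all of modulus `< 1`, and
peeling off one linear factor at a time shows `Mⁿ z → 0`. Being integer vectors, the `Mⁿ z`
are eventually `0`.
-/

open Matrix Polynomial Filter Topology Module

lemma Polynomial.eval_divByMonic_X_sub_C_ne_zero {R : Type*} [CommRing R] [IsDomain R]
    {p : R[X]} {a : R} (h : p.rootMultiplicity a = 1) : (p /ₘ (X - C a)).eval a ≠ 0 := by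
  have hp : p ≠ 0 := by rintro rfl; simp at h
  simpa [h] using eval_divByMonic_pow_rootMultiplicity_ne_zero a hp

lemma Polynomial.X_sub_C_mul_divByMonic_of_rootMultiplicity_eq_one {R : Type*} [CommRing R]
    [IsDomain R] {p : R[X]} {a : R} (h : p.rootMultiplicity a = 1) :
    (X - C a) * (p /ₘ (X - C a)) = p := by
  have hp : p ≠ 0 := by rintro rfl; simp at h
  exact mul_divByMonic_eq_iff_isRoot.2 ((rootMultiplicity_pos hp).1 (by omega))

lemma Polynomial.isRoot_and_ne_of_mem_roots_divByMonic {R : Type*} [CommRing R] [IsDomain R]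
    {p : R[X]} {a μ : R} (h : p.rootMultiplicity a = 1) (hμ : μ ∈ (p /ₘ (X - C a)).roots) :
    p.IsRoot μ ∧ μ ≠ a := by
  have hne := eval_divByMonic_X_sub_C_ne_zero h
  rw [mem_roots fun h0 => hne (by rw [h0, eval_zero])] at hμ
  refine ⟨hμ.dvd (Dvd.intro_left _ (X_sub_C_mul_divByMonic_of_rootMultiplicity_eq_one h)), ?_⟩
  rintro rfl
  exact hne hμ

lemma LinearMap.apply_aeval_eq_eval_mul {R V : Type*} [CommRing R] [AddCommGroup V]
    [Module R V] {f : Module.End R V} {φ : V →ₗ[R] R} {t : R} (hφ : ∀ x, φ (f x) = t * φ x)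
    (q : R[X]) (x : V) : φ (aeval f q x) = q.eval t * φ x := by
  induction q using Polynomial.induction_on generalizing x with
  | C a => simp [Module.algebraMap_end_apply]
  | add p q hp hq => simp [hp, hq, add_mul]
  | monomial n a ih =>
    rw [pow_succ, ← mul_assoc, map_mul, Module.End.mul_apply, ih, aeval_X, hφ]
    simp only [eval_mul, eval_pow, eval_X, eval_C]
    ring

lemma Submodule.eq_zero_of_apply_eq_zero_of_finrank_le_one {K V : Type*} [Field K]
    [AddCommGroup V] [Module K V] {W : Submodule K V} [FiniteDimensional K W]
    (hW : finrank K W ≤ 1) {φ : V →ₗ[K] K} {w v : V} (hw : w ∈ W) (hφw : φ w ≠ 0)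
    (hv : v ∈ W) (hφv : φ v = 0) : v = 0 := by
  obtain ⟨u, hu⟩ := finrank_le_one_iff.1 hW
  obtain ⟨a, ha⟩ := hu ⟨w, hw⟩
  obtain ⟨b, hb⟩ := hu ⟨v, hv⟩
  replace ha : a • (u : V) = w := congrArg Subtype.val ha
  replace hb : b • (u : V) = v := congrArg Subtype.val hb
  have hφu : φ u ≠ 0 := fun h => hφw (by simp [← ha, h])
  have hb0 : b = 0 := by simpa [← hb, hφu] using hφv
  simp [← hb, hb0]

theorem LinearMap.aeval_divByMonic_apply_eq_zero {K V : Type*} [Field K] [AddCommGroup V]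
    [Module K V] [FiniteDimensional K V] {f : Module.End K V} {t : K}
    (ht : f.charpoly.rootMultiplicity t = 1) {φ : V →ₗ[K] K} (hφ0 : φ ≠ 0)
    (hφ : ∀ x, φ (f x) = t * φ x) {x : V} (hx : φ x = 0) :
    aeval f (f.charpoly /ₘ (X - C t)) x = 0 := by
  set g := f.charpoly /ₘ (X - C t)
  have hrange : ∀ y, aeval f g y ∈ f.eigenspace t := fun y => by
    have : aeval f ((X - C t) * g) y = 0 := by
      rw [X_sub_C_mul_divByMonic_of_rootMultiplicity_eq_one ht, aeval_self_charpoly]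
      rfl
    simpa [sub_eq_zero, Module.algebraMap_end_apply] using this
  obtain ⟨y, hy⟩ : ∃ y, φ y ≠ 0 := not_forall.1 fun h => hφ0 (LinearMap.ext h)
  refine Submodule.eq_zero_of_apply_eq_zero_of_finrank_le_one (φ := φ)
    (ht ▸ f.finrank_eigenspace_le t) (hrange y) ?_ (hrange x) ?_
  · rw [apply_aeval_eq_eval_mul hφ]
    exact mul_ne_zero (eval_divByMonic_X_sub_C_ne_zero ht) hy
  · rw [apply_aeval_eq_eval_mul hφ, hx, mul_zero]

lemma tendsto_zero_of_le_mul_add {a b : ℕ → ℝ} {c : ℝ} (hc0 : 0 ≤ c) (hc1 : c < 1)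
    (ha : ∀ n, 0 ≤ a n) (hb : Tendsto b atTop (𝓝 0)) (hab : ∀ n, a (n + 1) ≤ c * a n + b n) :
    Tendsto a atTop (𝓝 0) := by
  refine tendsto_order.2 ⟨fun e he => .of_forall fun n => he.trans_le (ha n), fun ε hε => ?_⟩
  set β := ε * (1 - c) / 2
  obtain ⟨N, hN⟩ := eventually_atTop.1 (hb.eventually_le_const (by positivity : 0 < β))
  have hle : ∀ k, a (N + k) ≤ arithGeom c β (a N) k := by
    intro k
    induction k with
    | zero => rfl
    | succ k ih =>
      calc a (N + (k + 1)) ≤ c * a (N + k) + b (N + k) := hab (N + k)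
        _ ≤ c * arithGeom c β (a N) k + β := by gcongr; exact hN _ (by omega)
  have hlim : Tendsto (arithGeom c β (a N)) atTop (𝓝 (ε / 2)) := by
    convert tendsto_arithGeom_nhds_of_lt_one hc0 hc1 using 2
    simp only [β]
    field_simp [(sub_pos.2 hc1).ne']
  obtain ⟨K, hK⟩ := eventually_atTop.1 (hlim.eventually_lt_const (half_lt_self hε))
  refine eventually_atTop.2 ⟨N + K, fun n hn => ?_⟩
  obtain ⟨k, rfl⟩ := Nat.exists_eq_add_of_le (le_of_add_le_left hn)
  exact (hle k).trans_lt (hK k (by omega))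

theorem tendsto_pow_apply_of_aeval_prod_eq_zero {𝕜 E : Type*} [NormedField 𝕜]
    [NormedAddCommGroup E] [NormedSpace 𝕜 E] (f : E →ₗ[𝕜] E) {s : Multiset 𝕜}
    (hs : ∀ μ ∈ s, ‖μ‖ < 1) {x : E} (hx : aeval f (s.map fun μ => X - C μ).prod x = 0) :
    Tendsto (fun n => (f ^ n) x) atTop (𝓝 0) := by
  induction s using Multiset.induction generalizing x with
  | empty =>
    simp only [Multiset.map_zero, Multiset.prod_zero, map_one, Module.End.one_apply] at hx
    simp [hx]
  | cons μ s ih =>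
    set w := aeval f (X - C μ) x
    have hw : Tendsto (fun n => (f ^ n) w) atTop (𝓝 0) := by
      refine ih (fun ν hν => hs ν (Multiset.mem_cons_of_mem hν)) ?_
      rwa [Multiset.map_cons, Multiset.prod_cons, mul_comm, map_mul, Module.End.mul_apply] at hx
    have hstep : ∀ n, (f ^ (n + 1)) x = μ • (f ^ n) x + (f ^ n) w := by
      intro n
      have : f x = μ • x + w := by simp [w]
      rw [pow_succ, Module.End.mul_apply, this, map_add, map_smul]
    refine tendsto_zero_iff_norm_tendsto_zero.2 <| tendsto_zero_of_le_mul_add (norm_nonneg μ)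
      (hs μ (Multiset.mem_cons_self _ _)) (fun n => norm_nonneg _) (by simpa using hw.norm)
      (fun n => ?_)
    rw [hstep, ← norm_smul]
    exact norm_add_le _ _

theorem tendsto_pow_apply_of_aeval_eq_zero {𝕜 E : Type*} [NormedField 𝕜] [IsAlgClosed 𝕜]
    [NormedAddCommGroup E] [NormedSpace 𝕜 E] (f : E →ₗ[𝕜] E) {q : 𝕜[X]} (hq : q ≠ 0)
    (hroots : ∀ μ ∈ q.roots, ‖μ‖ < 1) {x : E} (hx : aeval f q x = 0) :
    Tendsto (fun n => (f ^ n) x) atTop (𝓝 0) := by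
  rw [(IsAlgClosed.splits q).eq_prod_roots, map_mul, Module.End.mul_apply, aeval_C,
    Module.algebraMap_end_apply, smul_eq_zero] at hx
  exact tendsto_pow_apply_of_aeval_prod_eq_zero f hroots
    (hx.resolve_left (leadingCoeff_ne_zero.2 hq))

lemma Matrix.rootMultiplicity_charpoly_map {n R S : Type*} [Fintype n] [DecidableEq n]
    [CommRing R] [CommRing S] {f : R →+* S} (hf : Function.Injective f) (A : Matrix n n R)
    (t : R) : (A.map f).charpoly.rootMultiplicity (f t) = A.charpoly.rootMultiplicity t := by
  rw [charpoly_map, ← eq_rootMultiplicity_map hf]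

lemma Matrix.vecMul_map_eq_smul {n R S : Type*} [Fintype n] [CommRing R] [CommRing S]
    (f : R →+* S) {A : Matrix n n R} {ω : n → R} {t : R} (h : ω ᵥ* A = t • ω) :
    (f ∘ ω) ᵥ* A.map f = f t • (f ∘ ω) := funext fun j => by
  simp [← RingHom.map_vecMul, h]

lemma Matrix.pow_map_mulVec {n R S : Type*} [Fintype n] [DecidableEq n] [CommRing R]
    [CommRing S] (f : R →+* S) (A : Matrix n n R) (v : n → R) (k : ℕ) :
    A.map f ^ k *ᵥ (f ∘ v) = f ∘ (A ^ k *ᵥ v) := funext fun i => by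
  rw [← Matrix.map_pow, Function.comp_apply, RingHom.map_mulVec]

theorem Matrix.aeval_toLin'_divByMonic_apply_eq_zero {K n : Type*} [Field K] [Fintype n]
    [DecidableEq n] {A : Matrix n n K} {t : K} (ht : A.charpoly.rootMultiplicity t = 1)
    {ω : n → K} (hω0 : ω ≠ 0) (hω : ω ᵥ* A = t • ω) {x : n → K} (hx : ω ⬝ᵥ x = 0) :
    aeval (toLin' A) (A.charpoly /ₘ (X - C t)) x = 0 := by
  rw [← charpoly_toLin'] at ht ⊢
  refine LinearMap.aeval_divByMonic_apply_eq_zero ht (φ := dotProductBilin K K ω) ?_ ?_ hx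
  · intro h
    refine hω0 (funext fun i => ?_)
    simpa using LinearMap.congr_fun h (Pi.single i 1)
  · intro y
    simp [dotProduct_mulVec, hω]

lemma eventually_eq_zero_of_tendsto_intCast {α ι : Type*} [Finite ι] {l : Filter α}
    {u : α → ι → ℤ} (h : Tendsto (fun a => (Int.cast ∘ u a : ι → ℂ)) l (𝓝 0)) :
    ∀ᶠ a in l, u a = 0 := by
  have hi : ∀ i, ∀ᶠ a in l, u a i = 0 := fun i => by
    filter_upwards [tendsto_pi_nhds.1 h i (Metric.ball_mem_nhds 0 one_pos)] with a ha
    rw [Set.mem_preimage, mem_ball_zero_iff, Function.comp_apply, Complex.norm_intCast] at ha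
    exact Int.abs_lt_one_iff.1 (by exact_mod_cast ha)
  simpa [funext_iff] using eventually_all.2 hi

theorem orthogonal_int_vector_eventually_null_general
    (d : ℕ) (M : Matrix (Fin d) (Fin d) ℤ)
    (lam : ℝ)
    (hsimple : Polynomial.rootMultiplicity lam (M.map (Int.cast : ℤ → ℝ)).charpoly = 1)
    (ωL : Fin d → ℝ) (hωL : ∀ i, 0 < ωL i)
    (heig : ωL ᵥ* (M.map (Int.cast : ℤ → ℝ)) = lam • ωL)
    (hsmall : ∀ μ : ℂ, (M.map (Int.cast : ℤ → ℂ)).charpoly.IsRoot μ → μ ≠ (lam : ℂ) →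
      ‖μ‖ < 1)
    (z : Fin d → ℤ) (hz : ∑ i, ωL i * (z i : ℝ) = 0) :
    ∃ n : ℕ, (M ^ n) *ᵥ z = 0 := by
  rcases isEmpty_or_nonempty (Fin d) with _ | ⟨⟨i⟩⟩
  · exact ⟨0, Subsingleton.elim _ _⟩
  have hA : (M.map (Int.cast : ℤ → ℝ)).map Complex.ofRealHom = M.map Int.cast := by ext; simp
  set A := M.map (Int.cast : ℤ → ℂ)
  have hsimpleA : A.charpoly.rootMultiplicity (lam : ℂ) = 1 := by
    rw [← hA, ← Complex.ofRealHom_eq_coe,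
      rootMultiplicity_charpoly_map Complex.ofRealHom.injective, hsimple]
  have hω0 : Complex.ofRealHom ∘ ωL ≠ 0 := fun h => (hωL i).ne' (by simpa using congrFun h i)
  have hgz : aeval (toLin' A) (A.charpoly /ₘ (X - C (lam : ℂ))) (Int.cast ∘ z) = 0 :=
    aeval_toLin'_divByMonic_apply_eq_zero hsimpleA hω0
      (hA ▸ vecMul_map_eq_smul Complex.ofRealHom heig)
      (by simpa [dotProduct] using congrArg Complex.ofReal hz)
  have hlim := tendsto_pow_apply_of_aeval_eq_zero (toLin' A)
    (fun h0 => eval_divByMonic_X_sub_C_ne_zero hsimpleA (by rw [h0, eval_zero]))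
    (fun μ hμ => (isRoot_and_ne_of_mem_roots_divByMonic hsimpleA hμ).elim (hsmall μ)) hgz
  have hcast : ∀ n, (toLin' A ^ n) (Int.cast ∘ z) = Int.cast ∘ (M ^ n *ᵥ z) := fun n => by
    simpa only [← toLin'_pow, toLin'_apply, Int.coe_castRingHom] using
      pow_map_mulVec (Int.castRingHom ℂ) M z n
  simp only [hcast] at hlim
  exact (eventually_eq_zero_of_tendsto_intCast (u := fun n => M ^ n *ᵥ z) hlim).exists

theorem orthogonal_int_vector_eventually_null
    (d : ℕ) (M : Matrix (Fin d) (Fin d) ℤ)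
    (lam : ℝ) (hlam : 1 < lam)
    (hsimple : Polynomial.rootMultiplicity lam (M.map (Int.cast : ℤ → ℝ)).charpoly = 1)
    (ωL : Fin d → ℝ) (hωL : ∀ i, 0 < ωL i)
    (heig : ωL ᵥ* (M.map (Int.cast : ℤ → ℝ)) = lam • ωL)
    (hsmall : ∀ μ : ℂ, (M.map (Int.cast : ℤ → ℂ)).charpoly.IsRoot μ → μ ≠ (lam : ℂ) →
      ‖μ‖ < 1)
    (z : Fin d → ℤ) (hz : ∑ i, ωL i * (z i : ℝ) = 0) :
    ∃ n : ℕ, (M ^ n) *ᵥ z = 0 :=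
  orthogonal_int_vector_eventually_null_general d M lam hsimple ωL hωL heig hsmall z hz
end
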